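/- arXiv:1208.4586 — 9 statements merged into one kernel-verified Lean document; each statement's English description precedes it below -/
import Mathlib

section
/- Let μ : D → H be a c-smooth projection, i.e., μ(D) = D for all D ∈ H and d(μ(D), μ(D')) ≤ c for all adjacent D ~ D'. Then for any query f : D → ℝ, the composed query f_H = f ∘ μ satisfies GS_{f_H} ≤ c · RS_f(H), where GS is global sensitivity (max of |f_H(D1) − f_H(D2)| over adjacent pairs) and RS_f(H) is the restricted sensitivity of f over H. -/
theorem stmt_2_general {D : Type*} (A : SimpleGraph D) (H : Set D)
    (μ : D → D) (hrange : ∀ x, μ x ∈ H)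
    (c R : ℝ) (hR : 0 ≤ R)
    (hsmooth : ∀ x y, A.Adj x y → (A.dist (μ x) (μ y) : ℝ) ≤ c)
    (f : D → ℝ)
    (hRS : ∀ x ∈ H, ∀ y ∈ H, |f x - f y| ≤ R * (A.dist x y : ℝ)) :
    ∀ x y, A.Adj x y → |f (μ x) - f (μ y)| ≤ c * R := by
  intro x y hxy
  calc |f (μ x) - f (μ y)| ≤ R * A.dist (μ x) (μ y) := hRS _ (hrange x) _ (hrange y)
    _ ≤ R * c := mul_le_mul_of_nonneg_left (hsmooth x y hxy) hR
    _ = c * R := mul_comm R c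

/-- If `μ : D → H` is a `c`-smooth projection (it fixes `H` pointwise and maps adjacent
datasets to datasets at distance at most `c`), and `R` is the restricted sensitivity of `f`
over `H` (so `|f D1 - f D2| ≤ R · d(D1,D2)` for all `D1, D2 ∈ H`), then the composed query
`f_H = f ∘ μ` has global sensitivity at most `c · R`: for every adjacent pair the values of
`f ∘ μ` differ by at most `c · R`. -/
theorem stmt_2 {D : Type*} (A : SimpleGraph D) (H : Set D)
    (μ : D → D) (hrange : ∀ x, μ x ∈ H) (hfix : ∀ x ∈ H, μ x = x)
    (c R : ℝ) (hR : 0 ≤ R)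
    (hsmooth : ∀ x y, A.Adj x y → (A.dist (μ x) (μ y) : ℝ) ≤ c)
    (f : D → ℝ)
    (hRS : ∀ x ∈ H, ∀ y ∈ H, |f x - f y| ≤ R * (A.dist x y : ℝ)) :
    ∀ x y, A.Adj x y → |f (μ x) - f (μ y)| ≤ c * R :=
  stmt_2_general A H μ hrange c R hR hsmooth f hRS
end

section
/- Let μ : D → H̄ be a projection of H with a c-smooth distance estimator d̂, and let f : D → ℝ with restricted sensitivity R = RS_f(H̄). Define f_H = f ∘ μ. Then for every D ∈ D, the local sensitivity satisfies LS_{f_H}(D) ≤ R · (2·d̂(D) + c + 1). -/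
/-!
The projections `μ x` and `μ y` of neighbours are joined through `x` and `y` by a walk of
length at most `d̂ x + 1 + d̂ y`, and smoothness of the estimator gives `d̂ y ≤ d̂ x + c`;
restricted sensitivity on `H̄` converts this distance into the bound on `f ∘ μ`.
-/

namespace SimpleGraph

variable {V : Type*} {G : SimpleGraph V}

theorem Connected.dist_le_dist_add_one_add_dist (hconn : G.Connected) {x y : V}
    (hxy : G.Adj x y) (u v : V) : G.dist u v ≤ G.dist u x + 1 + G.dist y v :=
  calc G.dist u v ≤ G.dist u x + G.dist x v := hconn.dist_triangle
    _ ≤ G.dist u x + (G.dist x y + G.dist y v) := by gcongr; exact hconn.dist_triangle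
    _ = G.dist u x + 1 + G.dist y v := by rw [dist_eq_one_iff_adj.mpr hxy]; ring

theorem Connected.dist_map_le_of_adj (hconn : G.Connected) {μ : V → V} {dhat : V → ℝ}
    (hdhat : ∀ x, (G.dist x (μ x) : ℝ) ≤ dhat x) {x y : V} (hxy : G.Adj x y) :
    (G.dist (μ x) (μ y) : ℝ) ≤ dhat x + 1 + dhat y := by
  have hpath := hconn.dist_le_dist_add_one_add_dist hxy (μ x) (μ y)
  rw [dist_comm (u := μ x) (v := x)] at hpath
  have hx := hdhat x
  have hy := hdhat y
  have hpath' : (G.dist (μ x) (μ y) : ℝ) ≤ G.dist x (μ x) + 1 + G.dist y (μ y) := by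
    exact_mod_cast hpath
  linarith

end SimpleGraph

theorem stmt_5_general {D : Type*} (A : SimpleGraph D) (hconn : A.Connected)
    (Hbar : Set D)
    (μ : D → D) (hrange : ∀ x, μ x ∈ Hbar)
    (c R : ℝ) (hR : 0 ≤ R)
    (dhat : D → ℝ)
    (h2 : ∀ x, (A.dist x (μ x) : ℝ) ≤ dhat x)
    (h3 : ∀ x y, A.Adj x y → |dhat x - dhat y| ≤ c)
    (f : D → ℝ)
    (hRS : ∀ x ∈ Hbar, ∀ y ∈ Hbar, |f x - f y| ≤ R * (A.dist x y : ℝ)) :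
    ∀ x y, A.Adj x y → |f (μ x) - f (μ y)| ≤ R * (2 * dhat x + c + 1) := by
  intro x y hxy
  have hdist := hconn.dist_map_le_of_adj h2 hxy
  have hsmooth : dhat y - dhat x ≤ c := (abs_sub_le_iff.mp (h3 x y hxy)).2
  calc |f (μ x) - f (μ y)| ≤ R * (A.dist (μ x) (μ y) : ℝ) := hRS _ (hrange x) _ (hrange y)
    _ ≤ R * (2 * dhat x + c + 1) := by gcongr; linarith

/-- Let `μ : D → H̄` be a projection of `H` with `c`-smooth distance estimator `dhat`, and
let `R = RS_f(H̄)` be the restricted sensitivity of `f` over `H̄`.  Then the local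
sensitivity of `f_H = f ∘ μ` at any dataset `x` is at most `R · (2·dhat x + c + 1)`:
for every neighbor `y` of `x`, `|f (μ x) - f (μ y)| ≤ R · (2·dhat x + c + 1)`. -/
theorem stmt_5 {D : Type*} (A : SimpleGraph D) (hconn : A.Connected)
    (H Hbar : Set D) (hHH : H ⊆ Hbar)
    (μ : D → D) (hrange : ∀ x, μ x ∈ Hbar) (hfix : ∀ x ∈ H, μ x = x)
    (c R : ℝ) (hR : 0 ≤ R)
    (dhat : D → ℝ)
    (h1 : ∀ x ∈ H, dhat x = 0)
    (h2 : ∀ x, (A.dist x (μ x) : ℝ) ≤ dhat x)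
    (h3 : ∀ x y, A.Adj x y → |dhat x - dhat y| ≤ c)
    (f : D → ℝ)
    (hRS : ∀ x ∈ Hbar, ∀ y ∈ Hbar, |f x - f y| ≤ R * (A.dist x y : ℝ)) :
    ∀ x y, A.Adj x y → |f (μ x) - f (μ y)| ≤ R * (2 * dhat x + c + 1) :=
  stmt_5_general A hconn Hbar μ hrange c R hR dhat h2 h3 f hRS
end

section
/- In the vertex-adjacency model on labeled graphs over a fixed vertex set V, the distance between two social networks (G1, ℓ1) and (G2, ℓ2) equals |U| + VC((G1 − U) △ (G2 − U)), where U = {v : ℓ1(v) ≠ ℓ2(v)}, G − U denotes removing all edges incident to vertices of U, △ denotes symmetric difference of edge sets (viewed as a graph), and VC denotes the minimum vertex cover size of that graph. -/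
/-!
A single step at `v` can change the label of `v` and any edges at `v`, so a walk of length `k`
from `N1` to `N2` yields a set of at most `k` vertices containing every vertex whose label
differs and covering every edge that differs; such a set must contain `U`, and outside `U` it is
a vertex cover of `(G1 − U) △ (G2 − U)`. Conversely, given `U ∪ C` with `C` a minimum such cover,
fixing the vertices of `U ∪ C` one at a time walks from `N1` to `N2`.
-/

namespace SocialNetwork

variable {V α : Type*}

def AgreeOff (x y : SimpleGraph V × (V → α)) (v : V) : Prop :=
  (∀ u w, u ≠ v → w ≠ v → (x.1.Adj u w ↔ y.1.Adj u w)) ∧ ∀ u, u ≠ v → x.2 u = y.2 u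

def IsDiffCover (x y : SimpleGraph V × (V → α)) (S : Set V) : Prop :=
  (∀ u, x.2 u ≠ y.2 u → u ∈ S) ∧ ∀ u w, ¬(x.1.Adj u w ↔ y.1.Adj u w) → u ∈ S ∨ w ∈ S

theorem isDiffCover_univ (x y : SimpleGraph V × (V → α)) : IsDiffCover x y Set.univ :=
  ⟨fun _ _ => trivial, fun _ _ _ => Or.inl trivial⟩

theorem IsDiffCover.insert_of_agreeOff {x y z : SimpleGraph V × (V → α)} {v : V} {T : Set V}
    (hxz : AgreeOff x z v) (hT : IsDiffCover z y T) : IsDiffCover x y (insert v T) := by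
  obtain ⟨hedge, hlabel⟩ := hxz
  constructor
  · intro u hu
    by_cases huv : u = v
    · exact Or.inl huv
    · exact Or.inr (hT.1 u (hlabel u huv ▸ hu))
  · intro u w hd
    by_cases huv : u = v
    · exact Or.inl (Or.inl huv)
    by_cases hwv : w = v
    · exact Or.inr (Or.inl hwv)
    exact (hT.2 u w fun h => hd ((hedge u w huv hwv).trans h)).imp Or.inr Or.inr

theorem IsDiffCover.sdiff {x y : SimpleGraph V × (V → α)} {T : Set V} (hT : IsDiffCover x y T)
    (U : Set V) :
    ∀ u w, u ∉ U → w ∉ U → ¬(x.1.Adj u w ↔ y.1.Adj u w) → u ∈ T \ U ∨ w ∈ T \ U :=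
  fun u w hu hw hd => (hT.2 u w hd).imp (⟨·, hu⟩) (⟨·, hw⟩)

theorem isDiffCover_union {x y : SimpleGraph V × (V → α)} {U C : Set V}
    (hU : {v | x.2 v ≠ y.2 v} ⊆ U)
    (hC : ∀ u w, u ∉ U → w ∉ U → ¬(x.1.Adj u w ↔ y.1.Adj u w) → u ∈ C ∨ w ∈ C) :
    IsDiffCover x y (U ∪ C) := by
  refine ⟨fun u hu => Or.inl (hU hu), fun u w hd => ?_⟩
  by_cases hu : u ∈ U
  · exact Or.inl (Or.inl hu)
  by_cases hw : w ∈ U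
  · exact Or.inr (Or.inl hw)
  exact (hC u w hu hw hd).imp Or.inr Or.inr

open scoped Classical in
noncomputable def patch (x y : SimpleGraph V × (V → α)) (S : Set V) :
    SimpleGraph V × (V → α) :=
  ({ Adj u w := if u ∈ S ∨ w ∈ S then y.1.Adj u w else x.1.Adj u w
     symm := ⟨fun u w => by simp only [or_comm (a := u ∈ S), y.1.adj_comm u w, x.1.adj_comm u w, imp_self]⟩
     loopless := ⟨fun u => by split_ifs <;> exact SimpleGraph.irrefl _⟩ },
    fun u => if u ∈ S then y.2 u else x.2 u)

open scoped Classical in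
@[simp]
theorem patch_fst_adj (x y : SimpleGraph V × (V → α)) (S : Set V) (u w : V) :
    (patch x y S).1.Adj u w ↔ if u ∈ S ∨ w ∈ S then y.1.Adj u w else x.1.Adj u w :=
  Iff.rfl

open scoped Classical in
@[simp]
theorem patch_snd (x y : SimpleGraph V × (V → α)) (S : Set V) (u : V) :
    (patch x y S).2 u = if u ∈ S then y.2 u else x.2 u :=
  rfl

theorem patch_empty (x y : SimpleGraph V × (V → α)) : patch x y ∅ = x := by
  ext u w <;> simp

theorem patch_eq_of_isDiffCover {x y : SimpleGraph V × (V → α)} {S : Set V}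
    (hS : IsDiffCover x y S) : patch x y S = y := by
  ext u w
  · rw [patch_fst_adj]
    split_ifs with huw
    · rfl
    · by_contra hd
      exact huw (hS.2 u w hd)
  · rw [patch_snd]
    split_ifs with hu
    · rfl
    · by_contra hd
      exact hu (hS.1 u hd)

theorem agreeOff_patch_insert (x y : SimpleGraph V × (V → α)) (S : Set V) (v : V) :
    AgreeOff (patch x y S) (patch x y (insert v S)) v := by
  classical
  constructor
  · intro u w hu hw
    simp only [patch_fst_adj, Set.mem_insert_iff, hu, hw, false_or]
  · intro u hu
    simp only [patch_snd, Set.mem_insert_iff, hu, false_or]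

variable {NG : SimpleGraph (SimpleGraph V × (V → α))}

theorem exists_isDiffCover_ncard_le_length (hNG : ∀ x y, NG.Adj x y → ∃ v, AgreeOff x y v)
    {x y : SimpleGraph V × (V → α)} (p : NG.Walk x y) :
    ∃ T : Set V, IsDiffCover x y T ∧ T.ncard ≤ p.length := by
  induction p with
  | nil => exact ⟨∅, ⟨fun _ h => absurd rfl h, fun _ _ h => absurd Iff.rfl h⟩, by simp⟩
  | cons h p ih =>
    obtain ⟨T, hT, hcard⟩ := ih
    obtain ⟨v, hv⟩ := hNG _ _ h
    refine ⟨insert v T, hT.insert_of_agreeOff hv, ?_⟩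
    calc (insert v T).ncard ≤ T.ncard + 1 := Set.ncard_insert_le v T
      _ ≤ (SimpleGraph.Walk.cons h p).length := by simpa using hcard

theorem exists_walk_patch (hNG : ∀ x y v, x ≠ y → AgreeOff x y v → NG.Adj x y)
    (x y : SimpleGraph V × (V → α)) {S : Set V} (hS : S.Finite) :
    ∃ p : NG.Walk x (patch x y S), p.length ≤ S.ncard := by
  induction S, hS using Set.Finite.induction_on with
  | empty => exact ⟨.copy .nil rfl (patch_empty x y).symm, by simp⟩
  | @insert v S hvS hS ih =>
    obtain ⟨p, hp⟩ := ih
    rw [Set.ncard_insert_of_notMem hvS hS]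
    by_cases heq : patch x y S = patch x y (insert v S)
    · exact ⟨p.copy rfl heq, by simp only [SimpleGraph.Walk.length_copy]; omega⟩
    · refine ⟨p.concat (hNG _ _ v heq (agreeOff_patch_insert x y S v)), ?_⟩
      simp only [SimpleGraph.Walk.length_concat]
      omega

theorem exists_walk_of_isDiffCover (hNG : ∀ x y v, x ≠ y → AgreeOff x y v → NG.Adj x y)
    {x y : SimpleGraph V × (V → α)} {S : Set V} (hS : S.Finite) (h : IsDiffCover x y S) :
    ∃ p : NG.Walk x y, p.length ≤ S.ncard := by
  obtain ⟨p, hp⟩ := exists_walk_patch hNG x y hS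
  exact ⟨p.copy rfl (patch_eq_of_isDiffCover h), by simpa using hp⟩

theorem dist_le_ncard_of_isDiffCover (hNG : ∀ x y v, x ≠ y → AgreeOff x y v → NG.Adj x y)
    {x y : SimpleGraph V × (V → α)} {S : Set V} (hS : S.Finite) (h : IsDiffCover x y S) :
    NG.dist x y ≤ S.ncard :=
  let ⟨p, hp⟩ := exists_walk_of_isDiffCover hNG hS h
  (SimpleGraph.dist_le p).trans hp

theorem exists_isDiffCover_ncard_le_dist [Finite V]
    (hstep : ∀ x y v, x ≠ y → AgreeOff x y v → NG.Adj x y)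
    (hNG : ∀ x y, NG.Adj x y → ∃ v, AgreeOff x y v) (x y : SimpleGraph V × (V → α)) :
    ∃ T : Set V, IsDiffCover x y T ∧ T.ncard ≤ NG.dist x y := by
  obtain ⟨p, -⟩ := exists_walk_of_isDiffCover hstep Set.finite_univ (isDiffCover_univ x y)
  obtain ⟨q, hq⟩ := SimpleGraph.Reachable.exists_walk_length_eq_dist ⟨p⟩
  simpa [hq] using exists_isDiffCover_ncard_le_length hNG q

end SocialNetwork

open SocialNetwork in
/-- In the vertex-adjacency model on social networks (graphs on a fixed finite vertex set
with labels `V → ℝ^m`), where two networks are adjacent iff they are distinct and agree on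
all edges not incident to some vertex `v` and on all labels other than that of `v`, the
shortest-path distance between two networks `N1, N2` equals `|U| + VC((G1−U) △ (G2−U))`,
where `U` is the set of vertices with differing labels and `VC` is the minimum size of a
vertex cover of the graph of edges (not incident to `U`) on which `N1` and `N2` differ. -/
theorem stmt_8 {V : Type*} [Fintype V] {m : ℕ}
    (NG : SimpleGraph (SimpleGraph V × (V → Fin m → ℝ)))
    (hNG : ∀ x y, NG.Adj x y ↔ x ≠ y ∧ ∃ v : V,
      (∀ u w : V, u ≠ v → w ≠ v → (x.1.Adj u w ↔ y.1.Adj u w)) ∧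
      (∀ u : V, u ≠ v → x.2 u = y.2 u))
    (N1 N2 : SimpleGraph V × (V → Fin m → ℝ))
    (U : Set V) (hU : U = {v : V | N1.2 v ≠ N2.2 v})
    (vc : ℕ)
    (hvc : IsLeast {n : ℕ | ∃ C : Set V, C.ncard = n ∧
      ∀ u w : V, u ∉ U → w ∉ U → ¬(N1.1.Adj u w ↔ N2.1.Adj u w) → u ∈ C ∨ w ∈ C} vc) :
    NG.dist N1 N2 = U.ncard + vc := by
  have hstep : ∀ x y v, x ≠ y → AgreeOff x y v → NG.Adj x y :=
    fun x y v hne hv => (hNG x y).2 ⟨hne, v, hv⟩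
  obtain ⟨⟨C, rfl, hC⟩, hmin⟩ := hvc
  apply le_antisymm
  · calc NG.dist N1 N2 ≤ (U ∪ C).ncard :=
          dist_le_ncard_of_isDiffCover hstep (Set.toFinite _) (isDiffCover_union hU.ge hC)
      _ ≤ U.ncard + C.ncard := Set.ncard_union_le U C
  · obtain ⟨T, hT, hTdist⟩ :=
      exists_isDiffCover_ncard_le_dist hstep (fun x y h => ((hNG x y).1 h).2) N1 N2
    have hUT : U ⊆ T := hU ▸ hT.1
    calc U.ncard + C.ncard ≤ U.ncard + (T \ U).ncard := 
          Nat.add_le_add_left (hmin ⟨T \ U, rfl, hT.sdiff U⟩) _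
      _ = T.ncard := by rw [add_comm, Set.ncard_sdiff_add_ncard_of_subset hUT]
      _ ≤ NG.dist N1 N2 := hTdist
end

section
/- With the LP of the previous statement, define d̂(G) = 4·Σ_v x*_v where x* is an optimal LP solution. Then d̂ is a 4-smooth distance estimator for the projection μ onto H_{2k} in the vertex-adjacency model: (1) d̂(G) = 0 whenever G has maximum degree ≤ k; (2) d̂(G) ≥ d(G, μ(G)), where d is vertex-adjacency distance; (3) |d̂(G1) − d̂(G2)| ≤ 4 for any two vertex-adjacent graphs G1, G2. -/
def LPFeasible {V : Type*} [Fintype V] [DecidableEq V] (k : ℕ) (G : SimpleGraph V)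
    (x : V → ℝ) (w : V → V → ℝ) : Prop :=
  (∀ v, 0 ≤ x v) ∧ (∀ u v, 0 ≤ w u v) ∧ (∀ u v, w u v = w v u) ∧
  (∀ u v, u ≠ v → G.Adj u v → (w u v ≤ 1 ∧ 1 - x u - x v ≤ w u v)) ∧
  (∀ u v, u ≠ v → ¬ G.Adj u v → w u v = 0) ∧
  (∀ u, ∑ v ∈ Finset.univ.erase u, w u v ≤ (k : ℝ))

/-!
Every edge deleted by `μ` has an endpoint `v` with `x v ≥ 1/4`, and there are at most
`4 · Σ x` such vertices; replacing the edges at these vertices one vertex at a time walks from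
`G` to `μ G` in the vertex-adjacency graph. If `G` has maximum degree `≤ k`, then `x = 0`
together with the edge indicator as `w` is feasible, so the optimum is `0`. If `G₁` and `G₂`
differ only at `a`, an optimal solution for `G₁` with `x a` raised to `1` and the weights at `a`
set to `0` is feasible for `G₂`, so the two optima differ by at most `1`.
-/

open Finset

namespace SimpleGraph

variable {V : Type*}

def replaceAt [DecidableEq V] (G H : SimpleGraph V) (a : V) : SimpleGraph V where
  Adj u w := if u = a ∨ w = a then H.Adj u w else G.Adj u w
  symm := ⟨fun u w h => by
    by_cases hu : u = a <;> by_cases hw : w = a <;> simp_all [adj_comm]⟩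
  loopless := ⟨fun u h => by by_cases hu : u = a <;> simp_all⟩

@[simp]
lemma replaceAt_adj [DecidableEq V] (G H : SimpleGraph V) (a u w : V) :
    (G.replaceAt H a).Adj u w ↔ if u = a ∨ w = a then H.Adj u w else G.Adj u w :=
  Iff.rfl

def IsVertexAdjacency (NG : SimpleGraph (SimpleGraph V)) : Prop :=
  ∀ g h : SimpleGraph V, NG.Adj g h ↔ g ≠ h ∧ ∃ v : V,
    ∀ u w : V, u ≠ v → w ≠ v → (g.Adj u w ↔ h.Adj u w)

variable {NG : SimpleGraph (SimpleGraph V)}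

lemma edist_le_one_of_adj_iff_off (hNG : IsVertexAdjacency NG)
    {G H : SimpleGraph V} {a : V} (h : ∀ u w, u ≠ a → w ≠ a → (G.Adj u w ↔ H.Adj u w)) :
    NG.edist G H ≤ 1 := by
  by_cases hGH : G = H
  · simp [hGH]
  · exact (edist_eq_one_iff_adj.mpr ((hNG G H).mpr ⟨hGH, a, h⟩)).le

lemma edist_le_card_of_adj_iff_off [DecidableEq V] (hNG : IsVertexAdjacency NG)
    (S : Finset V) {G H : SimpleGraph V}
    (h : ∀ u w, u ∉ S → w ∉ S → (G.Adj u w ↔ H.Adj u w)) :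
    NG.edist G H ≤ #S := by
  induction S using Finset.induction_on generalizing G with
  | empty =>
    have hGH : G = H := by ext u w; exact h u w (notMem_empty u) (notMem_empty w)
    simp [hGH]
  | insert a S ha ih =>
    have hG : ∀ u w, u ≠ a → w ≠ a → (G.Adj u w ↔ (G.replaceAt H a).Adj u w) := by
      intro u w hu hw; simp [hu, hw]
    have hH : ∀ u w, u ∉ S → w ∉ S → ((G.replaceAt H a).Adj u w ↔ H.Adj u w) := by
      intro u w hu hw
      by_cases hua : u = a ∨ w = a
      · simp [hua]
      · push Not at hua
        simpa [hua] using h u w (by simp [hu, hua.1]) (by simp [hw, hua.2])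
    calc NG.edist G H ≤ NG.edist G (G.replaceAt H a) + NG.edist (G.replaceAt H a) H :=
          SimpleGraph.edist_triangle
      _ ≤ 1 + #S := add_le_add (edist_le_one_of_adj_iff_off hNG hG) (ih hH)
      _ = #(insert a S) := by rw [card_insert_of_notMem ha]; push_cast; ring

lemma dist_le_card_of_adj_iff_off [DecidableEq V] (hNG : IsVertexAdjacency NG)
    (S : Finset V) {G H : SimpleGraph V}
    (h : ∀ u w, u ∉ S → w ∉ S → (G.Adj u w ↔ H.Adj u w)) :
    NG.dist G H ≤ #S :=
  ENat.toNat_le_of_le_natCast (edist_le_card_of_adj_iff_off hNG S h)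

end SimpleGraph

section LP

variable {V : Type*} [Fintype V] [DecidableEq V] {k : ℕ} {G : SimpleGraph V}
  {x : V → ℝ} {w : V → V → ℝ}

lemma lpFeasible_zero_of_ncard_neighborSet_le [DecidableRel G.Adj]
    (hdeg : ∀ v, (G.neighborSet v).ncard ≤ k) :
    LPFeasible k G 0 (fun u v => if G.Adj u v then 1 else 0) := by
  refine ⟨fun _ => le_rfl, fun u v => by positivity, fun u v => by simp [G.adj_comm],
    fun u v _ huv => by simp [huv], fun u v _ huv => by simp [huv], fun u => ?_⟩
  calc ∑ v ∈ univ.erase u, (if G.Adj u v then (1 : ℝ) else 0)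
      ≤ ∑ v, (if G.Adj u v then (1 : ℝ) else 0) :=
        sum_le_sum_of_subset_of_nonneg (erase_subset u univ) fun _ _ _ => by positivity
    _ = (G.neighborSet u).ncard := by
        rw [sum_boole, ← G.neighborFinset_eq_filter, G.card_neighborFinset_eq_degree,
          ← G.card_neighborSet_eq_degree, Set.ncard_eq_toFinset_card', Set.toFinset_card]
    _ ≤ k := by exact_mod_cast hdeg u

/-- With `x a = 1` every edge at `a` is covered without `w`-weight, so the edges at `a` may be
changed arbitrarily. -/
lemma LPFeasible.update_one {H : SimpleGraph V} {a : V} (h : LPFeasible k G x w)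
    (hGH : ∀ u v, u ≠ a → v ≠ a → (G.Adj u v ↔ H.Adj u v)) :
    LPFeasible k H (Function.update x a 1) (fun u v => if u = a ∨ v = a then 0 else w u v) := by
  obtain ⟨hx, hw, hsymm, hedge, hnonedge, hdeg⟩ := h
  have hx' : ∀ v, 0 ≤ Function.update x a 1 v := fun v => by
    rw [Function.update_apply]; split_ifs <;> simp [hx]
  refine ⟨hx', fun u v => ?_, fun u v => ?_, fun u v huv hadj => ?_,
    fun u v huv hadj => ?_, fun u => (sum_le_sum fun v _ => ?_).trans (hdeg u)⟩
  · beta_reduce; split_ifs <;> simp [hw]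
  · simp only [or_comm, hsymm u v]
  · by_cases hua : u = a ∨ v = a
    · rcases hua with rfl | rfl <;>
        simp only [true_or, or_true, ↓reduceIte, Function.update_self] <;>
        exact ⟨zero_le_one, by linarith [hx' u, hx' v]⟩
    · push Not at hua
      simpa [hua] using hedge u v huv ((hGH u v hua.1 hua.2).mpr hadj)
  · by_cases hua : u = a ∨ v = a
    · simp [hua]
    · push Not at hua
      simpa [hua] using hnonedge u v huv (by rwa [hGH u v hua.1 hua.2])
  · beta_reduce; split_ifs <;> simp [hw]

lemma sum_update_one_le (hx : ∀ v, 0 ≤ x v) (a : V) :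
    ∑ v, Function.update x a 1 v ≤ ∑ v, x v + 1 := by
  rw [sum_update_of_mem (mem_univ a), add_comm]
  linarith [sum_le_sum_of_subset_of_nonneg (sdiff_subset (s := univ) (t := {a}))
    fun v _ _ => hx v]

end LP

lemma mul_card_filter_le_sum {ι : Type*} [Fintype ι] {f : ι → ℝ} (hf : ∀ i, 0 ≤ f i)
    (c : ℝ) :
    c * #{i | c ≤ f i} ≤ ∑ i, f i :=
  calc c * #{i | c ≤ f i} ≤ ∑ i with c ≤ f i, f i := by
        simpa [mul_comm] using card_nsmul_le_sum _ f c fun i hi => (mem_filter.mp hi).2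
    _ ≤ ∑ i, f i := sum_le_sum_of_subset_of_nonneg (subset_univ _) fun i _ _ => hf i

theorem stmt_10_general {V : Type*} [Fintype V] [DecidableEq V] (k : ℕ)
    (NG : SimpleGraph (SimpleGraph V))
    (hNG : ∀ g h : SimpleGraph V, NG.Adj g h ↔ g ≠ h ∧ ∃ v : V,
      ∀ u w : V, u ≠ v → w ≠ v → (g.Adj u w ↔ h.Adj u w))
    (xs : SimpleGraph V → V → ℝ) (ws : SimpleGraph V → V → V → ℝ)
    (hfeas : ∀ G, LPFeasible k G (xs G) (ws G))
    (hopt : ∀ G x' w', LPFeasible k G x' w' → ∑ v, xs G v ≤ ∑ v, x' v)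
    (μ : SimpleGraph V → SimpleGraph V)
    (hμ : ∀ G u v, (μ G).Adj u v ↔ (G.Adj u v ∧ xs G u < 1/4 ∧ xs G v < 1/4))
    (dhat : SimpleGraph V → ℝ)
    (hdhat : ∀ G, dhat G = 4 * ∑ v, xs G v) :
    (∀ G : SimpleGraph V, (∀ v, (G.neighborSet v).ncard ≤ k) → dhat G = 0) ∧
    (∀ G : SimpleGraph V, (NG.dist G (μ G) : ℝ) ≤ dhat G) ∧
    (∀ G1 G2 : SimpleGraph V, NG.Adj G1 G2 → |dhat G1 - dhat G2| ≤ 4) := by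
  have hx (G : SimpleGraph V) : ∀ v, 0 ≤ xs G v := (hfeas G).1
  have hsmooth (G H : SimpleGraph V) (a : V)
      (hGH : ∀ u w, u ≠ a → w ≠ a → (G.Adj u w ↔ H.Adj u w)) :
      ∑ v, xs H v ≤ ∑ v, xs G v + 1 :=
    (hopt H _ _ ((hfeas G).update_one hGH)).trans (sum_update_one_le (hx G) a)
  refine ⟨fun G hdeg => ?_, fun G => ?_, fun G1 G2 hadj => ?_⟩
  · classical
    have hle := hopt G _ _ (lpFeasible_zero_of_ncard_neighborSet_le hdeg)
    rw [hdhat, le_antisymm (by simpa using hle) (sum_nonneg fun v _ => hx G v), mul_zero]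
  · have hdist : NG.dist G (μ G) ≤ #{v | 1/4 ≤ xs G v} :=
      SimpleGraph.dist_le_card_of_adj_iff_off hNG _ fun u w hu hw => by
        simp only [mem_filter, mem_univ, true_and, not_le] at hu hw
        rw [hμ]
        exact ⟨fun h => ⟨h, hu, hw⟩, And.left⟩
    have hcard := mul_card_filter_le_sum (hx G) (1/4)
    rw [hdhat]
    linarith [(Nat.cast_le (α := ℝ)).mpr hdist]
  · obtain ⟨-, a, hG⟩ := (hNG G1 G2).mp hadj
    have h12 := hsmooth G1 G2 a hG
    have h21 := hsmooth G2 G1 a fun u w hu hw => (hG u w hu hw).symm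
    rw [hdhat, hdhat, abs_le]
    constructor <;> linarith

/-- Given, for each graph `G`, an optimal LP solution `(xs G, ws G)` and the projection
`μ G` that removes every edge with an endpoint of LP-value `≥ 1/4`, the estimator
`dhat G = 4·Σ_v xs G v` is a `4`-smooth distance estimator for `μ` (into `H_{2k}`) in the
vertex-adjacency model (`NG`): (1) `dhat G = 0` whenever `G` has maximum degree `≤ k`;
(2) `dhat G ≥ d(G, μ G)` for the vertex-adjacency distance; and
(3) `|dhat G1 - dhat G2| ≤ 4` for vertex-adjacent `G1, G2`. -/
theorem stmt_10 {V : Type*} [Fintype V] [DecidableEq V] (k : ℕ) (hk : 0 < k)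
    (NG : SimpleGraph (SimpleGraph V))
    (hNG : ∀ g h : SimpleGraph V, NG.Adj g h ↔ g ≠ h ∧ ∃ v : V,
      ∀ u w : V, u ≠ v → w ≠ v → (g.Adj u w ↔ h.Adj u w))
    (xs : SimpleGraph V → V → ℝ) (ws : SimpleGraph V → V → V → ℝ)
    (hfeas : ∀ G, LPFeasible k G (xs G) (ws G))
    (hopt : ∀ G x' w', LPFeasible k G x' w' → ∑ v, xs G v ≤ ∑ v, x' v)
    (μ : SimpleGraph V → SimpleGraph V)
    (hμ : ∀ G u v, (μ G).Adj u v ↔ (G.Adj u v ∧ xs G u < 1/4 ∧ xs G v < 1/4))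
    (dhat : SimpleGraph V → ℝ)
    (hdhat : ∀ G, dhat G = 4 * ∑ v, xs G v) :
    (∀ G : SimpleGraph V, (∀ v, (G.neighborSet v).ncard ≤ k) → dhat G = 0) ∧
    (∀ G : SimpleGraph V, (NG.dist G (μ G) : ℝ) ≤ dhat G) ∧
    (∀ G1 G2 : SimpleGraph V, NG.Adj G1 G2 → |dhat G1 - dhat G2| ≤ 4) :=
  stmt_10_general k NG hNG xs ws hfeas hopt μ hμ dhat hdhat
end

section
/- Let f be a local profile query on social networks with profile p taking values in [0,1], i.e., f(G, ℓ) = Σ_{v ∈ V} p(v, G_v) where G_v is the sub-network induced on v and its neighbors. Then in the vertex-adjacency model, for any two networks G1, G2 ∈ H_k that are vertex-adjacent (differing at one vertex's edges, same labels), |f(G1) − f(G2)| ≤ 2k + 1; and for two networks in H_k with the same edges but labels differing at one vertex, |f(G1) − f(G2)| ≤ k + 1. Consequently RS_f(H_k) ≤ 2k + 1 in the vertex-adjacency model. -/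
/-!
Changing a network at one vertex `v0` can only change the profile of a vertex whose closed
neighbourhood contains `v0`, i.e. of `v0` itself or one of its neighbours before or after the
change: at most `2k + 1` vertices when only edges change and at most `k + 1` when only the label
of `v0` changes. Each of these profiles moves by at most `1`, since profiles take values in
`[0, 1]`.
-/

open Finset

theorem Finset.abs_sum_sub_sum_le_card {ι : Type*} [Fintype ι] {g₁ g₂ : ι → ℝ} (S : Finset ι)
    (hle : ∀ i, |g₁ i - g₂ i| ≤ 1) (heq : ∀ i ∉ S, g₁ i = g₂ i) :
    |∑ i, g₁ i - ∑ i, g₂ i| ≤ #S := by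
  have hsupp : ∑ i, (g₁ i - g₂ i) = ∑ i ∈ S, (g₁ i - g₂ i) :=
    (sum_subset (subset_univ S) fun i _ hi => by rw [heq i hi, sub_self]).symm
  calc |∑ i, g₁ i - ∑ i, g₂ i| = |∑ i ∈ S, (g₁ i - g₂ i)| := by rw [← sum_sub_distrib, hsupp]
    _ ≤ ∑ i ∈ S, |g₁ i - g₂ i| := abs_sum_le_sum_abs _ _
    _ ≤ ∑ _i ∈ S, (1 : ℝ) := sum_le_sum fun i _ => hle i
    _ = #S := by simp

namespace SimpleGraph

variable {V : Type*}

theorem ne_of_mem_insert_neighborSet {G : SimpleGraph V} {u v v₀ : V} (hv : v ≠ v₀)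
    (hadj : ¬G.Adj v₀ v) (hu : u ∈ insert v (G.neighborSet v)) : u ≠ v₀ := by
  rintro rfl
  rcases hu with rfl | hu
  · exact hv rfl
  · exact hadj (G.adj_symm hu)

theorem neighborSet_eq_of_adj_iff_off {G₁ G₂ : SimpleGraph V} {v v₀ : V} (hv : v ≠ v₀)
    (h₁ : ¬G₁.Adj v₀ v) (h₂ : ¬G₂.Adj v₀ v)
    (hE : ∀ u w, u ≠ v₀ → w ≠ v₀ → (G₁.Adj u w ↔ G₂.Adj u w)) :
    G₁.neighborSet v = G₂.neighborSet v := by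
  ext u
  by_cases hu : u = v₀
  · subst hu
    exact iff_of_false (fun h => h₁ (G₁.adj_symm h)) fun h => h₂ (G₂.adj_symm h)
  · exact hE v u hv hu

end SimpleGraph

def IsLocalProfile {V L : Type*} (p : V → SimpleGraph V → (V → L) → ℝ) : Prop :=
  ∀ (v : V) (G G' : SimpleGraph V) (ℓ ℓ' : V → L),
    G.neighborSet v = G'.neighborSet v →
    (∀ u w, u ∈ insert v (G.neighborSet v) → w ∈ insert v (G.neighborSet v) →
      (G.Adj u w ↔ G'.Adj u w)) →
    (∀ u ∈ insert v (G.neighborSet v), ℓ u = ℓ' u) →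
    p v G ℓ = p v G' ℓ'

namespace IsLocalProfile

variable {V L : Type*} {p : V → SimpleGraph V → (V → L) → ℝ} {v v₀ : V}

theorem eq_of_adj_iff_off (hp : IsLocalProfile p) {G₁ G₂ : SimpleGraph V} (ℓ : V → L)
    (hv : v ≠ v₀) (h₁ : ¬G₁.Adj v₀ v) (h₂ : ¬G₂.Adj v₀ v)
    (hE : ∀ u w, u ≠ v₀ → w ≠ v₀ → (G₁.Adj u w ↔ G₂.Adj u w)) :
    p v G₁ ℓ = p v G₂ ℓ :=
  hp v G₁ G₂ ℓ ℓ (SimpleGraph.neighborSet_eq_of_adj_iff_off hv h₁ h₂ hE)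
    (fun u w hu hw => hE u w (SimpleGraph.ne_of_mem_insert_neighborSet hv h₁ hu)
      (SimpleGraph.ne_of_mem_insert_neighborSet hv h₁ hw))
    fun _ _ => rfl

theorem eq_of_label_eq_off (hp : IsLocalProfile p) {G : SimpleGraph V} {ℓ₁ ℓ₂ : V → L}
    (hv : v ≠ v₀) (hadj : ¬G.Adj v₀ v) (hl : ∀ u, u ≠ v₀ → ℓ₁ u = ℓ₂ u) :
    p v G ℓ₁ = p v G ℓ₂ :=
  hp v G G ℓ₁ ℓ₂ rfl (fun _ _ _ _ => Iff.rfl)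
    fun _ hu => hl _ (SimpleGraph.ne_of_mem_insert_neighborSet hv hadj hu)

end IsLocalProfile

theorem abs_sub_le_one_of_mem_Icc {a b : ℝ} (ha : a ∈ Set.Icc (0 : ℝ) 1)
    (hb : b ∈ Set.Icc (0 : ℝ) 1) : |a - b| ≤ 1 :=
  abs_sub_le_of_nonneg_of_le ha.1 ha.2 hb.1 hb.2

/-- Let `p` be a local profile with values in `[0,1]`: `p v G ℓ` depends only on the labeled
subgraph induced on `v` and its neighbors.  Let `f G ℓ = Σ_v p v G ℓ` be the associated
local profile query.  Then for networks of maximum degree `≤ k`: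
(a) if `G1, G2` are vertex-adjacent (they agree on all edges not incident to some vertex
`v0`) and carry the same labels, then `|f G1 ℓ - f G2 ℓ| ≤ 2k + 1`; and
(b) if the edges agree and the labels differ at a single vertex, then
`|f G ℓ1 - f G ℓ2| ≤ k + 1`.  Consequently `RS_f(H_k) ≤ 2k + 1` in the vertex-adjacency
model. -/
theorem stmt_11 {V : Type*} [Fintype V] {m : ℕ} (k : ℕ)
    (p : V → SimpleGraph V → (V → Fin m → ℝ) → ℝ)
    (hrange : ∀ v G ℓ, p v G ℓ ∈ Set.Icc (0 : ℝ) 1)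
    (hloc : ∀ (v : V) (G G' : SimpleGraph V) (ℓ ℓ' : V → Fin m → ℝ),
      G.neighborSet v = G'.neighborSet v →
      (∀ u w, u ∈ insert v (G.neighborSet v) → w ∈ insert v (G.neighborSet v) →
        (G.Adj u w ↔ G'.Adj u w)) →
      (∀ u ∈ insert v (G.neighborSet v), ℓ u = ℓ' u) →
      p v G ℓ = p v G' ℓ')
    (f : SimpleGraph V → (V → Fin m → ℝ) → ℝ)
    (hf : ∀ G ℓ, f G ℓ = ∑ v, p v G ℓ) :
    (∀ (G1 G2 : SimpleGraph V) (ℓ : V → Fin m → ℝ),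
      (∀ v, (G1.neighborSet v).ncard ≤ k) → (∀ v, (G2.neighborSet v).ncard ≤ k) →
      (∃ v0 : V, ∀ u w : V, u ≠ v0 → w ≠ v0 → (G1.Adj u w ↔ G2.Adj u w)) →
      |f G1 ℓ - f G2 ℓ| ≤ 2 * (k : ℝ) + 1) ∧
    (∀ (G : SimpleGraph V) (ℓ1 ℓ2 : V → Fin m → ℝ),
      (∀ v, (G.neighborSet v).ncard ≤ k) →
      (∃ v0 : V, ∀ u : V, u ≠ v0 → ℓ1 u = ℓ2 u) →
      |f G ℓ1 - f G ℓ2| ≤ (k : ℝ) + 1) := by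
  classical
  refine ⟨fun G1 G2 ℓ hd1 hd2 ⟨v0, hE⟩ => ?_, fun G ℓ1 ℓ2 hd ⟨v0, hl⟩ => ?_⟩
  · let S := insert v0 ((G1.neighborSet v0).toFinset ∪ (G2.neighborSet v0).toFinset)
    have hS : #S ≤ 2 * k + 1 := calc
      #S ≤ #(G1.neighborSet v0).toFinset + #(G2.neighborSet v0).toFinset + 1 :=
        (card_insert_le _ _).trans (Nat.add_le_add_right (card_union_le _ _) 1)
      _ ≤ 2 * k + 1 := by
        linarith [Set.ncard_eq_toFinset_card' (G1.neighborSet v0) ▸ hd1 v0,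
          Set.ncard_eq_toFinset_card' (G2.neighborSet v0) ▸ hd2 v0]
    rw [hf, hf]
    refine (S.abs_sum_sub_sum_le_card (fun v => abs_sub_le_one_of_mem_Icc (hrange v G1 ℓ)
      (hrange v G2 ℓ)) fun v hv => ?_).trans (by exact_mod_cast hS)
    simp only [S, mem_insert, mem_union, Set.mem_toFinset, SimpleGraph.mem_neighborSet,
      not_or] at hv
    exact IsLocalProfile.eq_of_adj_iff_off hloc ℓ hv.1 hv.2.1 hv.2.2 hE
  · let S := insert v0 (G.neighborSet v0).toFinset
    have hS : #S ≤ k + 1 :=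
      (card_insert_le _ _).trans (Nat.add_le_add_right 
        (Set.ncard_eq_toFinset_card' (G.neighborSet v0) ▸ hd v0) 1)
    rw [hf, hf]
    refine (S.abs_sum_sub_sum_le_card (fun v => abs_sub_le_one_of_mem_Icc (hrange v G ℓ1)
      (hrange v G ℓ2)) fun v hv => ?_).trans (by exact_mod_cast hS)
    simp only [S, mem_insert, Set.mem_toFinset, SimpleGraph.mem_neighborSet, not_or] at hv
    exact IsLocalProfile.eq_of_label_eq_off hloc hv.1 hv.2 hl
end

section
/- Let f be a local profile query with profile values in [0,1] on networks of max degree ≤ k. In the edge-adjacency model, if G1, G2 ∈ H_k differ by exactly one edge e = {u,v} (same labels), then |f(G1) − f(G2)| ≤ k + 1. Consequently RS_f(H_k) ≤ k + 1 in the edge-adjacency model. -/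
/-!
Write `N[x]` for the closed neighbourhood of `x` in the graph containing the edge `uv`.
The profile of `x` can only change if the edge `uv` lies inside `N[x]`, i.e. `u, v ∈ N[x]`;
every such `x` lies in `N[u]`, which has at most `k + 1` vertices. Each of these terms moves by
at most `1`, because profile values lie in `[0, 1]`.
-/

open Finset

namespace SimpleGraph

variable {V : Type*} {G₁ G₂ : SimpleGraph V} {u v x : V}

theorem neighborSet_eq_of_adj_iff_off_pair
    (hagree : ∀ a b : V, ¬(a = u ∧ b = v) → ¬(a = v ∧ b = u) →
      (G₁.Adj a b ↔ G₂.Adj a b))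
    (hxu : x ≠ u) (hxv : x ≠ v) : G₁.neighborSet x = G₂.neighborSet x :=
  Set.ext fun y => hagree x y (fun h => hxu h.1) (fun h => hxv h.1)

theorem adj_iff_on_closedNbhd_of_adj_iff_off_pair
    (hagree : ∀ a b : V, ¬(a = u ∧ b = v) → ¬(a = v ∧ b = u) →
      (G₁.Adj a b ↔ G₂.Adj a b))
    (hx : ¬(u ∈ insert x (G₁.neighborSet x) ∧ v ∈ insert x (G₁.neighborSet x))) :
    ∀ a b, a ∈ insert x (G₁.neighborSet x) → b ∈ insert x (G₁.neighborSet x) →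
      (G₁.Adj a b ↔ G₂.Adj a b) := by
  intro a b ha hb
  refine hagree a b ?_ ?_
  · rintro ⟨rfl, rfl⟩
    exact hx ⟨ha, hb⟩
  · rintro ⟨rfl, rfl⟩
    exact hx ⟨hb, ha⟩

theorem ncard_setOf_mem_closedNbhd_le [Finite V] (G : SimpleGraph V) {k : ℕ}
    (hdeg : (G.neighborSet u).ncard ≤ k) (v : V) :
    {x | u ∈ insert x (G.neighborSet x) ∧ v ∈ insert x (G.neighborSet x)}.ncard ≤
      k + 1 := by
  have hsub : {x | u ∈ insert x (G.neighborSet x) ∧ v ∈ insert x (G.neighborSet x)} ⊆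
      insert u (G.neighborSet u) := by
    rintro x ⟨hux | hux, -⟩
    · exact hux ▸ Set.mem_insert u _
    · exact Set.mem_insert_of_mem u (G.adj_symm hux)
  calc _ ≤ (insert u (G.neighborSet u)).ncard := Set.ncard_le_ncard hsub
    _ ≤ (G.neighborSet u).ncard + 1 := Set.ncard_insert_le u _
    _ ≤ k + 1 := Nat.add_le_add_right hdeg 1

end SimpleGraph

theorem abs_sum_sub_sum_le_ncard {ι : Type*} [Fintype ι] {g h : ι → ℝ} (s : Set ι)
    (hgh : ∀ i, |g i - h i| ≤ 1) (hs : ∀ i ∉ s, g i = h i) :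
    |∑ i, g i - ∑ i, h i| ≤ s.ncard := by
  classical
  have hsum : ∑ i, g i - ∑ i, h i = ∑ i ∈ s.toFinset, (g i - h i) := by
    rw [← sum_sub_distrib]
    refine (sum_subset (subset_univ _) fun i _ hi => ?_).symm
    rw [hs i (by simpa using hi), sub_self]
  calc |∑ i, g i - ∑ i, h i| ≤ ∑ i ∈ s.toFinset, |g i - h i| :=
        hsum ▸ abs_sum_le_sum_abs _ _
    _ ≤ s.toFinset.card • (1 : ℝ) := sum_le_card_nsmul _ _ _ fun i _ => hgh i
    _ = s.ncard := by rw [nsmul_one, Set.ncard_eq_toFinset_card']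

theorem abs_sum_profile_sub_le_of_adj {V : Type*} [Fintype V] {m k : ℕ}
    (p : V → SimpleGraph V → (V → Fin m → ℝ) → ℝ)
    (hrange : ∀ v G ℓ, p v G ℓ ∈ Set.Icc (0 : ℝ) 1)
    (hloc : ∀ (v : V) (G G' : SimpleGraph V) (ℓ ℓ' : V → Fin m → ℝ),
      G.neighborSet v = G'.neighborSet v →
      (∀ u w, u ∈ insert v (G.neighborSet v) → w ∈ insert v (G.neighborSet v) →
        (G.Adj u w ↔ G'.Adj u w)) →
      (∀ u ∈ insert v (G.neighborSet v), ℓ u = ℓ' u) →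
      p v G ℓ = p v G' ℓ')
    {G₁ G₂ : SimpleGraph V} (ℓ : V → Fin m → ℝ) {u v : V}
    (hdeg : (G₁.neighborSet u).ncard ≤ k)
    (hagree : ∀ a b : V, ¬(a = u ∧ b = v) → ¬(a = v ∧ b = u) →
      (G₁.Adj a b ↔ G₂.Adj a b))
    (huv : G₁.Adj u v) :
    |∑ x, p x G₁ ℓ - ∑ x, p x G₂ ℓ| ≤ (k : ℝ) + 1 := by
  set touched := {x | u ∈ insert x (G₁.neighborSet x) ∧ v ∈ insert x (G₁.neighborSet x)}
  have hunchanged : ∀ x ∉ touched, p x G₁ ℓ = p x G₂ ℓ := by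
    intro x hx
    have hxu : x ≠ u := by
      rintro rfl
      exact hx ⟨Set.mem_insert x _, Set.mem_insert_of_mem x huv⟩
    have hxv : x ≠ v := by
      rintro rfl
      exact hx ⟨Set.mem_insert_of_mem x huv.symm, Set.mem_insert x _⟩
    exact hloc x G₁ G₂ ℓ ℓ (SimpleGraph.neighborSet_eq_of_adj_iff_off_pair hagree hxu hxv)
      (SimpleGraph.adj_iff_on_closedNbhd_of_adj_iff_off_pair hagree hx) fun _ _ => rfl
  calc _ ≤ (touched.ncard : ℝ) :=
        abs_sum_sub_sum_le_ncard _
          (fun x => abs_sub_le_one_of_mem_Icc (hrange x G₁ ℓ) (hrange x G₂ ℓ)) hunchanged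
    _ ≤ (k : ℝ) + 1 := by exact_mod_cast G₁.ncard_setOf_mem_closedNbhd_le hdeg v

/-- Let `p` be a local profile with values in `[0,1]` and `f G ℓ = Σ_v p v G ℓ` the
associated local profile query.  In the edge-adjacency model: if `G1, G2` have maximum
degree `≤ k`, carry the same labels, and differ in exactly the single edge `{u,v}` (they
agree on every other pair, and disagree on `{u,v}`), then `|f G1 ℓ - f G2 ℓ| ≤ k + 1`.
Consequently `RS_f(H_k) ≤ k + 1` in the edge-adjacency model. -/
theorem stmt_12 {V : Type*} [Fintype V] {m : ℕ} (k : ℕ)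
    (p : V → SimpleGraph V → (V → Fin m → ℝ) → ℝ)
    (hrange : ∀ v G ℓ, p v G ℓ ∈ Set.Icc (0 : ℝ) 1)
    (hloc : ∀ (v : V) (G G' : SimpleGraph V) (ℓ ℓ' : V → Fin m → ℝ),
      G.neighborSet v = G'.neighborSet v →
      (∀ u w, u ∈ insert v (G.neighborSet v) → w ∈ insert v (G.neighborSet v) →
        (G.Adj u w ↔ G'.Adj u w)) →
      (∀ u ∈ insert v (G.neighborSet v), ℓ u = ℓ' u) →
      p v G ℓ = p v G' ℓ')
    (f : SimpleGraph V → (V → Fin m → ℝ) → ℝ)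
    (hf : ∀ G ℓ, f G ℓ = ∑ v, p v G ℓ) :
    ∀ (G1 G2 : SimpleGraph V) (ℓ : V → Fin m → ℝ) (u v : V), u ≠ v →
      (∀ x, (G1.neighborSet x).ncard ≤ k) → (∀ x, (G2.neighborSet x).ncard ≤ k) →
      (∀ a b : V, ¬(a = u ∧ b = v) → ¬(a = v ∧ b = u) → (G1.Adj a b ↔ G2.Adj a b)) →
      ¬(G1.Adj u v ↔ G2.Adj u v) →
      |f G1 ℓ - f G2 ℓ| ≤ (k : ℝ) + 1 := by
  intro G1 G2 ℓ u v _ hd1 hd2 hagree hne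
  rw [hf, hf]
  by_cases h1 : G1.Adj u v
  · exact abs_sum_profile_sub_le_of_adj p hrange hloc ℓ (hd1 u) hagree h1
  · have h2 : G2.Adj u v := by tauto
    rw [abs_sub_comm]
    exact abs_sum_profile_sub_le_of_adj p hrange hloc ℓ (hd2 u)
      (fun a b ha hb => (hagree a b ha hb).symm) h2
end

section
/- Let f(G) count the number of triangles in a graph G on n ≥ 3 vertices (labels ignored). In the vertex-adjacency model, any β-smooth upper bound S on the local sensitivity of f satisfies S(G) ≥ exp(−2β)·(n − 2) for every graph G. -/
/-!
Starting from any `G`, make a vertex `a` universal and then isolate another vertex `b`; this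
takes two vertex-adjacency steps. Making `b` universal in the result is one more step, and it
creates the `n - 2` new triangles `{a, b, w}`. So the local sensitivity is at least `n - 2` at a
graph within distance `2` of `G`, and smoothness transports this bound to `G` at the cost of a
factor `exp (-2β)`.
-/

/-- The number of triangles in `G`. -/
noncomputable def triCount {V : Type*} [Fintype V] (G : SimpleGraph V) : ℕ :=
  {s : Finset V | G.IsNClique 3 s}.ncard

open Finset SimpleGraph

section Triangles

variable {V : Type*} [Fintype V]

lemma triCount_eq_card_cliqueFinset [DecidableEq V] (G : SimpleGraph V) [DecidableRel G.Adj] :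
    triCount G = #(G.cliqueFinset 3) := by
  rw [triCount, ← Set.ncard_coe_finset]
  simp [cliqueFinset]

/-- The triangles of `G` avoid the isolated vertex `b`, while `H` has the `n - 2` triangles
`{a, b, w}` through `b`. -/
lemma triCount_add_card_sub_two_le {G H : SimpleGraph V} (hGH : G ≤ H) {a b : V} (hab : a ≠ b)
    (ha : H.IsUniversal a) (hb : H.IsUniversal b) (hGb : ∀ w, ¬G.Adj b w) :
    triCount G + (Fintype.card V - 2) ≤ triCount H := by
  classical
  rw [triCount_eq_card_cliqueFinset, triCount_eq_card_cliqueFinset,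
    ← card_filter_add_card_filter_not (s := H.cliqueFinset 3) (p := (b ∈ ·))]
  have hG : #(G.cliqueFinset 3) ≤ #((H.cliqueFinset 3).filter (b ∉ ·)) := by
    refine card_le_card fun s hs => mem_filter.2 ⟨cliqueFinset_mono (H := H) hGH hs, fun hbs => ?_⟩
    rw [mem_cliqueFinset_iff] at hs
    obtain ⟨w, hws, hwb⟩ := exists_mem_ne (by rw [hs.card_eq]; norm_num) b
    exact hGb w (hs.isClique hbs hws hwb.symm)
  have hH : Fintype.card V - 2 ≤ #((H.cliqueFinset 3).filter (b ∈ ·)) := by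
    calc Fintype.card V - 2 = #({a, b}ᶜ : Finset V) := by rw [card_compl, card_pair hab]
      _ ≤ _ := by
        refine card_le_card_of_injOn (fun w => {a, b, w}) (fun w hw => ?_) fun x hx y _ hxy => ?_
        · simp only [coe_compl, coe_pair, Set.mem_compl_iff, Set.mem_insert_iff,
            Set.mem_singleton_iff, not_or] at hw
          simp only [coe_filter, mem_cliqueFinset_iff, is3Clique_triple_iff, Set.mem_ofPred_eq,
            mem_insert, mem_singleton, true_or, or_true, and_true]
          exact ⟨ha hab, ha (Ne.symm hw.1), hb (Ne.symm hw.2)⟩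
        · have hx' : x ∈ ({a, b, y} : Finset V) := by simp only at hxy; rw [← hxy]; simp
          simp only [coe_compl, coe_pair, Set.mem_compl_iff, Set.mem_insert_iff,
            Set.mem_singleton_iff, not_or] at hx
          simpa [hx.1, hx.2] using hx'
  omega

end Triangles

section VertexAdjacency

variable {V : Type*}

def AgreeOff (v : V) (g h : SimpleGraph V) : Prop :=
  ∀ u w, u ≠ v → w ≠ v → (g.Adj u w ↔ h.Adj u w)

lemma agreeOff_sup_starGraph (g : SimpleGraph V) (v : V) : AgreeOff v g (g ⊔ starGraph v) := by
  intro u w hu hw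
  simp [hu, hw]

lemma agreeOff_deleteIncidenceSet (g : SimpleGraph V) (v : V) :
    AgreeOff v g (g.deleteIncidenceSet v) := by
  intro u w hu hw
  simp [deleteIncidenceSet_adj, hu, hw]

lemma edist_le_one_of_agreeOff {NG : SimpleGraph (SimpleGraph V)}
    (hNG : ∀ g h : SimpleGraph V, NG.Adj g h ↔ g ≠ h ∧ ∃ v : V, AgreeOff v g h)
    {g h : SimpleGraph V} {v : V} (hgh : AgreeOff v g h) :
    NG.edist g h ≤ 1 := by
  rw [edist_le_one_iff_adj_or_eq, hNG]
  by_cases hgh' : g = h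
  · exact Or.inr hgh'
  · exact Or.inl ⟨hgh', v, hgh⟩

end VertexAdjacency

lemma SimpleGraph.dist_le_two_of_edist_le_one {α : Type*} {G : SimpleGraph α} {x y z : α}
    (hxy : G.edist x y ≤ 1) (hyz : G.edist y z ≤ 1) : G.dist x z ≤ 2 := by
  have hxz : G.edist x z ≤ 2 :=
    G.edist_triangle.trans ((add_le_add hxy hyz).trans_eq one_add_one_eq_two)
  have hreach : G.Reachable x z :=
    reachable_of_edist_ne_top (ne_top_of_le_ne_top (by decide) hxz)
  exact_mod_cast hreach.coe_dist_eq_edist ▸ hxz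

lemma exp_mul_le_of_smooth {α : Type*} {NG : SimpleGraph α} {β : ℝ} (hβ : 0 ≤ β) {S : α → ℝ}
    (hsmooth : ∀ g h, Real.exp (-β * (NG.dist g h : ℝ)) * S h ≤ S g) {g h : α} {k x : ℝ}
    (hd : (NG.dist g h : ℝ) ≤ k) (hx0 : 0 ≤ x) (hx : x ≤ S h) :
    Real.exp (-β * k) * x ≤ S g :=
  calc Real.exp (-β * k) * x ≤ Real.exp (-β * (NG.dist g h : ℝ)) * S h :=
        mul_le_mul (Real.exp_le_exp.2 (by nlinarith)) hx hx0 (Real.exp_pos _).le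
    _ ≤ S g := hsmooth g h

/-- Let `f` count triangles in graphs on `n ≥ 3` vertices, and let `NG` be the
vertex-adjacency relation (`g ~ h` iff `g ≠ h` and they agree on all edges not incident to
some vertex).  Any `β`-smooth upper bound `S` on the local sensitivity of `f` — i.e.
`S g ≥ |f g - f h|` for adjacent `g, h`, and `S g ≥ exp(-β·d(g,h))·S h` for all `g, h` —
satisfies `S G ≥ exp(-2β)·(n - 2)` for every graph `G`. -/
theorem stmt_14 {V : Type*} [Fintype V] (hn : 3 ≤ Fintype.card V)
    (NG : SimpleGraph (SimpleGraph V))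
    (hNG : ∀ g h : SimpleGraph V, NG.Adj g h ↔ g ≠ h ∧ ∃ v : V,
      ∀ u w : V, u ≠ v → w ≠ v → (g.Adj u w ↔ h.Adj u w))
    (β : ℝ) (hβ : 0 ≤ β) (S : SimpleGraph V → ℝ)
    (hub : ∀ g h : SimpleGraph V, NG.Adj g h → |(triCount g : ℝ) - (triCount h : ℝ)| ≤ S g)
    (hsmooth : ∀ g h : SimpleGraph V, Real.exp (-β * (NG.dist g h : ℝ)) * S h ≤ S g) :
    ∀ G : SimpleGraph V, Real.exp (-2 * β) * ((Fintype.card V : ℝ) - 2) ≤ S G := by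
  intro G
  obtain ⟨a, b, hab⟩ := Fintype.exists_pair_of_one_lt_card (by omega) (α := V)
  set G₂ := (G ⊔ starGraph a).deleteIncidenceSet b
  set G₃ := G₂ ⊔ starGraph b
  have hdist : NG.dist G G₂ ≤ 2 := dist_le_two_of_edist_le_one
    (edist_le_one_of_agreeOff hNG (agreeOff_sup_starGraph G a))
    (edist_le_one_of_agreeOff hNG (agreeOff_deleteIncidenceSet _ b))
  have hb₂ : ∀ w, ¬G₂.Adj b w := by simp [G₂, deleteIncidenceSet_adj]
  have hb₃ : G₃.IsUniversal b := fun w hw => Or.inr (starGraph_center_adj hw)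
  have ha₃ : G₃.IsUniversal a := fun w hw => by
    by_cases hwb : w = b <;> simp [G₃, G₂, deleteIncidenceSet_adj, hab, hw, hwb, Ne.symm hw]
  have hadj : NG.Adj G₂ G₃ :=
    (hNG _ _).2 ⟨fun h => hb₂ a (h ▸ hb₃ hab.symm), b, agreeOff_sup_starGraph G₂ b⟩
  have hcount := triCount_add_card_sub_two_le le_sup_left hab ha₃ hb₃ hb₂
  have hn₂ : (2 : ℝ) ≤ Fintype.card V := by exact_mod_cast (by omega : 2 ≤ Fintype.card V)
  have hS₂ : (Fintype.card V : ℝ) - 2 ≤ S G₂ := by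
    have hcount' := (Nat.cast_le (α := ℝ)).2 hcount
    push_cast [Nat.cast_sub (by omega : 2 ≤ Fintype.card V)] at hcount'
    linarith [hub G₂ G₃ hadj, neg_abs_le ((triCount G₂ : ℝ) - triCount G₃)]
  have hG := exp_mul_le_of_smooth hβ hsmooth (k := 2) (by exact_mod_cast hdist) (by linarith) hS₂
  rwa [mul_comm (-β), mul_neg, ← neg_mul] at hG
end

section
/- For any graph G ∈ H_k (maximum degree ≤ k) on n vertices, the number of triangles in G is at most n·k² (in fact at most n·k²/6, but n·k² suffices), while the restricted sensitivity of the triangle-counting query over H_k in the vertex-adjacency model is at most 3k². -/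
/-!
Triangles through a vertex `v` correspond to pairs of neighbours of `v`, so there are at most
`C(k, 2) ≤ k²` of them. Hence two graphs whose adjacency agrees on all pairs avoiding a vertex
set `S` differ by at most `|S| k²` triangles. Changing the neighbourhood of one vertex at a time
shows that the vertex-adjacency graph is connected, and a shortest path of length `d` between
`G₁` and `G₂` changes adjacency only at `d` vertices. The first bound is the comparison of `G`
with the empty graph, taking `S` to be all of `V`.
-/

open Finset

namespace SimpleGraph

variable {V : Type*}

def AdjEqOff (S : Finset V) (g h : SimpleGraph V) : Prop :=
  ∀ u w, u ∉ S → w ∉ S → (g.Adj u w ↔ h.Adj u w)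

lemma adjEqOff_singleton_iff {v : V} {g h : SimpleGraph V} :
    AdjEqOff {v} g h ↔ ∀ u w, u ≠ v → w ≠ v → (g.Adj u w ↔ h.Adj u w) := by
  simp only [AdjEqOff, mem_singleton]

lemma adjEqOff_univ [Fintype V] (g h : SimpleGraph V) : AdjEqOff univ g h :=
  fun u _ hu => absurd (mem_univ u) hu

lemma AdjEqOff.symm {S : Finset V} {g h : SimpleGraph V} (hgh : AdjEqOff S g h) :
    AdjEqOff S h g :=
  fun u w hu hw => (hgh u w hu hw).symm

lemma AdjEqOff.eq_of_empty {g h : SimpleGraph V} (hgh : AdjEqOff ∅ g h) : g = h := by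
  ext u w
  exact hgh u w (notMem_empty u) (notMem_empty w)

lemma AdjEqOff.trans [DecidableEq V] {S T : Finset V} {g g' h : SimpleGraph V}
    (hgg' : AdjEqOff S g g') (hg'h : AdjEqOff T g' h) : AdjEqOff (S ∪ T) g h := by
  intro u w hu hw
  rw [mem_union, not_or] at hu hw
  exact (hgg' u w hu.1 hw.1).trans (hg'h u w hu.2 hw.2)

lemma ncard_neighborSet_eq_degree [Fintype V] (G : SimpleGraph V) [DecidableRel G.Adj]
    (v : V) : (G.neighborSet v).ncard = G.degree v := by
  rw [Set.ncard_eq_toFinset_card', ← card_neighborSet_eq_degree, Set.toFinset_card]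

lemma triCount_eq_card_cliqueFinset [Fintype V] [DecidableEq V] (G : SimpleGraph V)
    [DecidableRel G.Adj] : triCount G = #(G.cliqueFinset 3) := by
  rw [triCount, ← Set.ncard_coe_finset, coe_cliqueFinset]
  rfl

lemma card_cliqueFinset_three_mem_le [Fintype V] [DecidableEq V] (G : SimpleGraph V)
    [DecidableRel G.Adj] (v : V) :
    #{t ∈ G.cliqueFinset 3 | v ∈ t} ≤ (G.degree v).choose 2 := by
  rw [← card_neighborFinset_eq_degree, ← card_powersetCard]
  refine card_le_card_of_injOn (fun t => t.erase v) (fun t ht => ?_) (fun t ht t' ht' htt' => ?_)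
  · simp only [coe_filter, mem_cliqueFinset_iff, Set.mem_ofPred_eq] at ht
    refine mem_powersetCard.2 ⟨fun u hu => ?_, (ht.1.erase_of_mem ht.2).card_eq⟩
    exact (mem_neighborFinset G v u).2
      (ht.1.1 ht.2 (mem_of_mem_erase hu) (ne_of_mem_erase hu).symm)
  · simp only [coe_filter, Set.mem_ofPred_eq] at ht ht'
    rw [← insert_erase ht.2, ← insert_erase ht'.2]
    exact congrArg (insert v) htt'

lemma AdjEqOff.isNClique {S t : Finset V} {g h : SimpleGraph V} {n : ℕ} (hgh : AdjEqOff S g h)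
    (hSt : Disjoint S t) (ht : g.IsNClique n t) : h.IsNClique n t := by
  refine ⟨fun u hu w hw huw => ?_, ht.2⟩
  exact (hgh u w (disjoint_right.1 hSt hu) (disjoint_right.1 hSt hw)).1 (ht.1 hu hw huw)

lemma triCount_le_triCount_add [Fintype V] {k : ℕ} {S : Finset V} {G₁ G₂ : SimpleGraph V}
    (hG₁ : ∀ v, (G₁.neighborSet v).ncard ≤ k) (hG : AdjEqOff S G₁ G₂) :
    triCount G₁ ≤ triCount G₂ + #S * k ^ 2 := by
  classical
  have hsub : G₁.cliqueFinset 3 ⊆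
      G₂.cliqueFinset 3 ∪ S.biUnion fun v => {t ∈ G₁.cliqueFinset 3 | v ∈ t} := by
    intro t ht
    by_cases hSt : Disjoint S t
    · exact mem_union_left _
        (mem_cliqueFinset_iff.2 (hG.isNClique hSt (mem_cliqueFinset_iff.1 ht)))
    · obtain ⟨v, hvS, hvt⟩ := not_disjoint_iff.1 hSt
      exact mem_union_right _ (mem_biUnion.2 ⟨v, hvS, mem_filter.2 ⟨ht, hvt⟩⟩)
  have hvertex : ∀ v ∈ S, #{t ∈ G₁.cliqueFinset 3 | v ∈ t} ≤ k ^ 2 := fun v _ =>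
    calc #{t ∈ G₁.cliqueFinset 3 | v ∈ t} ≤ (G₁.degree v).choose 2 :=
          card_cliqueFinset_three_mem_le G₁ v
      _ ≤ k.choose 2 := Nat.choose_le_choose 2 (ncard_neighborSet_eq_degree G₁ v ▸ hG₁ v)
      _ ≤ k ^ 2 := Nat.choose_le_pow k 2
  rw [triCount_eq_card_cliqueFinset, triCount_eq_card_cliqueFinset]
  calc #(G₁.cliqueFinset 3)
        ≤ #(G₂.cliqueFinset 3) + #(S.biUnion fun v => {t ∈ G₁.cliqueFinset 3 | v ∈ t}) :=
        (card_le_card hsub).trans (card_union_le _ _)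
    _ ≤ #(G₂.cliqueFinset 3) + #S * k ^ 2 := by
        gcongr
        exact card_biUnion_le_card_mul _ _ _ hvertex

lemma abs_triCount_sub_le [Fintype V] {k : ℕ} {S : Finset V} {G₁ G₂ : SimpleGraph V}
    (hG₁ : ∀ v, (G₁.neighborSet v).ncard ≤ k)
    (hG₂ : ∀ v, (G₂.neighborSet v).ncard ≤ k) (hG : AdjEqOff S G₁ G₂) :
    |(triCount G₁ : ℝ) - triCount G₂| ≤ #S * k ^ 2 := by
  have h₁₂ : (triCount G₁ : ℝ) ≤ triCount G₂ + #S * k ^ 2 := by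
    exact_mod_cast triCount_le_triCount_add hG₁ hG
  have h₂₁ : (triCount G₂ : ℝ) ≤ triCount G₁ + #S * k ^ 2 := by
    exact_mod_cast triCount_le_triCount_add hG₂ hG.symm
  exact abs_sub_le_iff.2 ⟨by linarith, by linarith⟩

lemma triCount_bot [Fintype V] : triCount (⊥ : SimpleGraph V) = 0 := by
  classical
  rw [triCount_eq_card_cliqueFinset, card_eq_zero]
  ext t
  simp [isNClique_bot_iff]

def spliceAt [DecidableEq V] (g h : SimpleGraph V) (v : V) : SimpleGraph V where
  Adj u w := if u = v ∨ w = v then h.Adj u w else g.Adj u w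
  symm := ⟨fun u w => by
    simp only [or_comm (a := w = v)]
    split_ifs
    exacts [fun huw => huw.symm, fun huw => huw.symm]⟩

variable [DecidableEq V]

lemma adjEqOff_spliceAt (g h : SimpleGraph V) (v : V) : AdjEqOff {v} g (spliceAt g h v) := by
  intro u w hu hw
  rw [mem_singleton] at hu hw
  simp [spliceAt, hu, hw]

lemma AdjEqOff.spliceAt_insert {S : Finset V} {g h : SimpleGraph V} {v : V}
    (hgh : AdjEqOff (insert v S) g h) : AdjEqOff S (spliceAt g h v) h := by
  intro u w hu hw
  by_cases huw : u = v ∨ w = v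
  · simp [spliceAt, huw]
  · rw [not_or] at huw
    simpa [spliceAt, huw] using hgh u w (by simp [huw.1, hu]) (by simp [huw.2, hw])

variable {NG : SimpleGraph (SimpleGraph V)}

lemma AdjEqOff.reachable (hNG : ∀ g h v, g ≠ h → AdjEqOff {v} g h → NG.Adj g h)
    {S : Finset V} {g h : SimpleGraph V} (hgh : AdjEqOff S g h) : NG.Reachable g h := by
  induction S using Finset.induction_on generalizing g with
  | empty => exact hgh.eq_of_empty ▸ Reachable.refl g
  | insert v S _ ih =>
    have hstep : NG.Reachable g (spliceAt g h v) := by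
      by_cases hg : g = spliceAt g h v
      · exact hg ▸ Reachable.refl g
      · exact (hNG _ _ v hg (adjEqOff_spliceAt g h v)).reachable
    exact hstep.trans (ih hgh.spliceAt_insert)

lemma Walk.exists_adjEqOff (hNG : ∀ g h, NG.Adj g h → ∃ v, AdjEqOff {v} g h)
    {g h : SimpleGraph V} (p : NG.Walk g h) :
    ∃ S : Finset V, #S ≤ p.length ∧ AdjEqOff S g h := by
  induction p with
  | nil => exact ⟨∅, by simp, fun _ _ _ _ => Iff.rfl⟩
  | cons hadj p ih =>
    obtain ⟨S, hS, hgS⟩ := ih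
    obtain ⟨v, hv⟩ := hNG _ _ hadj
    refine ⟨{v} ∪ S, ?_, hv.trans hgS⟩
    calc #({v} ∪ S) ≤ 1 + #S := by simpa using card_union_le {v} S
      _ ≤ (cons hadj p).length := by rw [Walk.length_cons]; omega

lemma exists_adjEqOff_card_le_dist [Fintype V]
    (hNG : ∀ g h, NG.Adj g h ↔ g ≠ h ∧ ∃ v, AdjEqOff {v} g h) (g h : SimpleGraph V) :
    ∃ S : Finset V, #S ≤ NG.dist g h ∧ AdjEqOff S g h := by
  have hreach : NG.Reachable g h :=
    (adjEqOff_univ g h).reachable fun g h v hne hv => (hNG g h).2 ⟨hne, v, hv⟩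
  obtain ⟨p, hp⟩ := hreach.exists_walk_length_eq_dist
  exact hp ▸ p.exists_adjEqOff fun g h hgh => ((hNG g h).1 hgh).2

end SimpleGraph

open SimpleGraph

/-- For graphs of maximum degree `≤ k` on `n` vertices: the number of triangles is at most
`n·k²`, and the restricted sensitivity of the triangle-counting query over `H_k` in the
vertex-adjacency model is at most `3k²`: for any `G1, G2 ∈ H_k`,
`|f G1 - f G2| ≤ 3k² · d(G1, G2)` where `d` is the vertex-adjacency distance `NG.dist`. -/
theorem stmt_15 {V : Type*} [Fintype V] (k : ℕ)
    (NG : SimpleGraph (SimpleGraph V))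
    (hNG : ∀ g h : SimpleGraph V, NG.Adj g h ↔ g ≠ h ∧ ∃ v : V,
      ∀ u w : V, u ≠ v → w ≠ v → (g.Adj u w ↔ h.Adj u w)) :
    (∀ G : SimpleGraph V, (∀ v, (G.neighborSet v).ncard ≤ k) →
      triCount G ≤ Fintype.card V * k ^ 2) ∧
    (∀ G1 G2 : SimpleGraph V,
      (∀ v, (G1.neighborSet v).ncard ≤ k) → (∀ v, (G2.neighborSet v).ncard ≤ k) →
      |(triCount G1 : ℝ) - (triCount G2 : ℝ)| ≤ 3 * (k : ℝ) ^ 2 * (NG.dist G1 G2 : ℝ)) := by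
  classical
  have hNG' : ∀ g h, NG.Adj g h ↔ g ≠ h ∧ ∃ v, AdjEqOff {v} g h := by
    simpa only [adjEqOff_singleton_iff] using hNG
  refine ⟨fun G hG => ?_, fun G₁ G₂ hG₁ hG₂ => ?_⟩
  · simpa [triCount_bot] using triCount_le_triCount_add hG (adjEqOff_univ G ⊥)
  obtain ⟨S, hS, hGS⟩ := exists_adjEqOff_card_le_dist hNG' G₁ G₂
  calc |(triCount G₁ : ℝ) - triCount G₂| ≤ #S * k ^ 2 := abs_triCount_sub_le hG₁ hG₂ hGS
    _ ≤ NG.dist G₁ G₂ * k ^ 2 := by gcongr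
    _ = 1 * k ^ 2 * NG.dist G₁ G₂ := by ring
    _ ≤ 3 * k ^ 2 * NG.dist G₁ G₂ := by gcongr; norm_num
end

section
/- Greedy potential decrease: for a graph G define φ(G) = Σ_{v : deg(v) ≥ k} (deg(v) − k). Suppose G can be transformed into a graph of maximum degree ≤ k by deleting all edges incident to some set of d vertices (so d(G, H_k) ≤ d in the vertex model). Then there exists a vertex v such that φ(G − v) ≤ (1 − 1/d)·φ(G), where G − v removes all edges incident to v. -/
/-!
Write `excess k m = max (m - k) 0`, so that `φ(G)` is the sum of the excesses of the degrees.
Fix a vertex `u` and add up, over `v ∈ S`, the drop of its excess caused by deleting `v`.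
If `u ∈ S`, the term `v = u` alone clears the excess. If `u ∉ S`, all but at most `k`
neighbours of `u` lie in `S`, so the excess of `u` is at most its number of neighbours in `S`,
and deleting each of them lowers it by one. Summing over `u`, the `d` drops
`φ(G) - φ(G - v)`, `v ∈ S`, add up to at least `φ(G)`, so one of them is at least `φ(G) / d`.
-/

/-- The graph obtained from `G` by removing all edges incident to a vertex of `S`. -/
def remSet {V : Type*} (G : SimpleGraph V) (S : Set V) : SimpleGraph V where
  Adj a b := G.Adj a b ∧ a ∉ S ∧ b ∉ S
  symm := ⟨by rintro a b ⟨h, ha, hb⟩; exact ⟨h.symm, hb, ha⟩⟩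
  loopless := ⟨by rintro a ⟨h, -, -⟩; exact G.loopless.irrefl a h⟩

/-- The excess-degree potential `φ(G) = Σ_{v : deg v ≥ k} (deg v − k)`. -/
noncomputable def pot {V : Type*} [Fintype V] (k : ℕ) (G : SimpleGraph V) : ℝ :=
  ∑ v : V, max (((G.neighborSet v).ncard : ℝ) - (k : ℝ)) 0

open Finset

noncomputable def excess (k m : ℕ) : ℝ := max ((m : ℝ) - k) 0

section Excess

variable {k m : ℕ}

lemma excess_mono (k : ℕ) : Monotone (excess k) := fun _ _ h =>
  max_le_max (sub_le_sub_right (Nat.cast_le.2 h) _) le_rfl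

@[simp]
lemma excess_zero (k : ℕ) : excess k 0 = 0 := by
  simp [excess]

lemma excess_eq_zero_of_le (h : m ≤ k) : excess k m = 0 :=
  max_eq_right (sub_nonpos.2 (Nat.cast_le.2 h))

lemma excess_le_of_le_add {t : ℕ} (h : m ≤ k + t) : excess k m ≤ t :=
  max_le (by rw [sub_le_iff_le_add']; exact_mod_cast h) t.cast_nonneg

lemma excess_sub_excess_pred (h : k < m) : excess k m - excess k (m - 1) = 1 := by
  have h' : k ≤ m - 1 := by omega
  rw [excess, excess, max_eq_left (by simpa using h.le), max_eq_left (by simpa using h'),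
    Nat.cast_pred (by omega)]
  ring

end Excess

section RemSet

variable {V : Type*} (G : SimpleGraph V) {S : Set V} {u v : V}

lemma neighborSet_remSet_subset (S : Set V) (u : V) :
    (remSet G S).neighborSet u ⊆ G.neighborSet u :=
  fun _ h => h.1

lemma neighborSet_remSet_of_mem (h : u ∈ S) : (remSet G S).neighborSet u = ∅ :=
  Set.eq_empty_of_forall_notMem fun _ hw => hw.2.1 h

lemma neighborSet_remSet_of_notMem (h : u ∉ S) :
    (remSet G S).neighborSet u = G.neighborSet u \ S := by
  ext w
  simp only [SimpleGraph.mem_neighborSet, Set.mem_sdiff, remSet]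
  tauto

lemma ncard_neighborSet_remSet_singleton [Finite V] (huv : G.Adj u v) :
    ((remSet G {v}).neighborSet u).ncard = (G.neighborSet u).ncard - 1 := by
  rw [neighborSet_remSet_of_notMem (S := {v}) G (G.ne_of_adj huv),
    Set.ncard_sdiff_singleton_of_mem ((G.mem_neighborSet u v).2 huv)]

lemma excess_ncard_neighborSet_remSet_le [Finite V] (k : ℕ) (S : Set V) (u : V) :
    excess k ((remSet G S).neighborSet u).ncard ≤ excess k (G.neighborSet u).ncard :=
  excess_mono k (Set.ncard_le_ncard (neighborSet_remSet_subset G S u))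

end RemSet

section Potential

variable {V : Type*} [Fintype V] (k : ℕ) (G : SimpleGraph V)

lemma pot_eq_sum_excess : pot k G = ∑ u, excess k (G.neighborSet u).ncard := rfl

lemma pot_remSet_le (S : Set V) : pot k (remSet G S) ≤ pot k G :=
  sum_le_sum fun u _ => excess_ncard_neighborSet_remSet_le G k S u

variable {k G} {S : Finset V}
  (hdel : ∀ v : V, ((remSet G (S : Set V)).neighborSet v).ncard ≤ k)
include hdel

lemma excess_le_card_adj_of_notMem [DecidableRel G.Adj] {u : V} (hu : u ∉ S) :
    excess k (G.neighborSet u).ncard ≤ #{v ∈ S | G.Adj u v} := by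
  apply excess_le_of_le_add
  have hin : (G.neighborSet u ∩ S).ncard = #{v ∈ S | G.Adj u v} := by
    rw [← Set.ncard_coe_finset]
    congr 1
    ext w
    simp [and_comm]
  have hout : (G.neighborSet u \ S).ncard ≤ k := by
    rw [← neighborSet_remSet_of_notMem G (Finset.mem_coe.not.2 hu)]
    exact hdel u
  rw [← Set.ncard_inter_add_ncard_sdiff_eq_ncard (G.neighborSet u) S]
  omega

lemma excess_le_sum_sub_excess_remSet (u : V) :
    excess k (G.neighborSet u).ncard ≤
      ∑ v ∈ S, (excess k (G.neighborSet u).ncard -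
        excess k ((remSet G {v}).neighborSet u).ncard) := by
  have hdrop : ∀ v ∈ S, 0 ≤ excess k (G.neighborSet u).ncard -
      excess k ((remSet G {v}).neighborSet u).ncard :=
    fun v _ => sub_nonneg.2 (excess_ncard_neighborSet_remSet_le G k _ u)
  rcases le_or_gt (G.neighborSet u).ncard k with hle | hgt
  · exact (excess_eq_zero_of_le hle).le.trans (sum_nonneg hdrop)
  by_cases hu : u ∈ S
  · calc excess k (G.neighborSet u).ncard
        = excess k (G.neighborSet u).ncard -
            excess k ((remSet G {u}).neighborSet u).ncard := by
          rw [neighborSet_remSet_of_mem G (Set.mem_singleton u), Set.ncard_empty, excess_zero,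
            sub_zero]
      _ ≤ _ := single_le_sum hdrop hu
  classical
  calc excess k (G.neighborSet u).ncard
      ≤ #{v ∈ S | G.Adj u v} := excess_le_card_adj_of_notMem hdel hu
    _ = ∑ v ∈ S, if G.Adj u v then (1 : ℝ) else 0 := natCast_card_filter _ _
    _ ≤ _ := by
      refine sum_le_sum fun v hv => ?_
      split_ifs with huv
      · rw [ncard_neighborSet_remSet_singleton G huv, excess_sub_excess_pred hgt]
      · exact hdrop v hv

lemma pot_le_sum_sub_pot_remSet :
    pot k G ≤ ∑ v ∈ S, (pot k G - pot k (remSet G {v})) :=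
  calc pot k G
      ≤ ∑ u, ∑ v ∈ S, (excess k (G.neighborSet u).ncard -
          excess k ((remSet G {v}).neighborSet u).ncard) :=
        sum_le_sum fun u _ => excess_le_sum_sub_excess_remSet hdel u
    _ = ∑ v ∈ S, (pot k G - pot k (remSet G {v})) := by
        rw [sum_comm]
        simp only [pot_eq_sum_excess, sum_sub_distrib]

end Potential

/-- Greedy potential decrease: if deleting all edges incident to some set `S` of `d`
vertices turns `G` into a graph of maximum degree `≤ k` (so `d(G, H_k) ≤ d` in the vertex
model), then some vertex `v` satisfies `φ(G − v) ≤ (1 − 1/d)·φ(G)`. -/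
theorem stmt_16 {V : Type*} [Fintype V] [Nonempty V] (k d : ℕ)
    (G : SimpleGraph V) (S : Finset V) (hcard : S.card = d)
    (hdel : ∀ v : V, ((remSet G (S : Set V)).neighborSet v).ncard ≤ k) :
    ∃ v : V, pot k (remSet G {v}) ≤ (1 - 1 / (d : ℝ)) * pot k G := by
  rcases S.eq_empty_or_nonempty with rfl | hS
  · -- `1 / 0 = 0`, so it remains to see that deleting a vertex does not increase `pot`.
    subst hcard
    obtain ⟨v⟩ := ‹Nonempty V›
    exact ⟨v, by simpa using pot_remSet_le k G {v}⟩
  have hd : (d : ℝ) ≠ 0 := by rw [← hcard]; exact_mod_cast hS.card_pos.ne'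
  have hsum : ∑ _v ∈ S, pot k G / d ≤ ∑ v ∈ S, (pot k G - pot k (remSet G {v})) := by
    rw [sum_const, hcard, nsmul_eq_mul, mul_div_cancel₀ _ hd]
    exact pot_le_sum_sub_pot_remSet hdel
  obtain ⟨v, -, hv⟩ := exists_le_of_sum_le hS hsum
  exact ⟨v, by rw [one_sub_mul, one_div_mul_eq_div]; linarith⟩
end
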